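/- For each fixed real x and λ, as ε → 0⁺ the function φ_{λ/ε}^{(α,α)}(εx) := ₂F₁(α + 1/2 + iλ/(2ε), α + 1/2 − iλ/(2ε); α+1; −sinh²(εx)) converges to the normalized Bessel function j_α(λx) = Γ(α+1) Σ_{m≥0} (−1)^m / (m! Γ(α+1+m)) (λx/2)^{2m}. -/

import Mathlib

open Filter

noncomputable def cpoch (a : ℂ) (k : ℕ) : ℂ := (ascPochhammer ℂ k).eval a

/-- Gauss hypergeometric series ₂F₁(a,b;c;z). -/
noncomputable def hyp2F1 (a b c z : ℂ) : ℂ :=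
  ∑' n : ℕ, cpoch a n * cpoch b n / (cpoch c n * (n.factorial : ℂ)) * z ^ n

/-- Normalized Bessel function j_α(t). -/
noncomputable def besselNorm (α t : ℝ) : ℝ :=
  Real.Gamma (α + 1) *
    ∑' m : ℕ, ((-1 : ℝ) ^ m / ((m.factorial : ℝ) * Real.Gamma (α + 1 + m))) * (t / 2) ^ (2 * m)

/-!
With `σ = sinh (εx) / ε`, the `n`-th term of the ₂F₁ series is the product over `k < n` of the
real ratios `-σ² ((α + 1/2 + k)² ε² + λ²/4) / ((α + 1 + k)(k + 1))`, because
`(α + 1/2 + k + iλ/(2ε)) (α + 1/2 + k - iλ/(2ε)) sinh² (εx) = ((α + 1/2 + k)² ε² + λ²/4) σ²`.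
As `ε → 0⁺`, `σ → x`, so each ratio tends to `-(λx/2)² / ((α + 1 + k)(k + 1))`, the ratio of
consecutive terms of `j_α(λx)`. For `ε ≤ ε₀` and `σ² ≤ Y` with `Y ε₀² < 1` the ratios are
dominated by ratios tending to `Y ε₀²`, whose products are summable; Tannery's theorem concludes.
-/

open Finset Topology

lemma cpoch_eq_prod (a : ℂ) (n : ℕ) : cpoch a n = ∏ k ∈ range n, (a + k) := by
  induction n with
  | zero => simp [cpoch]
  | succ n ih => rw [prod_range_succ, ← ih]; simp [cpoch, ascPochhammer_succ_eval]

lemma hyp2F1_term_eq_prod (a b c z : ℂ) (n : ℕ) :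
    cpoch a n * cpoch b n / (cpoch c n * (n.factorial : ℂ)) * z ^ n
      = ∏ k ∈ range n, (a + k) * (b + k) / ((c + k) * (k + 1)) * z := by
  rw [← prod_range_add_one_eq_factorial, Nat.cast_prod]
  simp only [cpoch_eq_prod, prod_mul_distrib, prod_div_distrib, prod_const, card_range]
  push_cast
  ring

lemma Real.Gamma_add_nat_eq_mul_prod {s : ℝ} (hs : 0 < s) (n : ℕ) :
    Real.Gamma (s + n) = Real.Gamma s * ∏ k ∈ range n, (s + k) := by
  induction n with
  | zero => simp
  | succ n ih =>
    rw [Nat.cast_succ, ← add_assoc, Real.Gamma_add_one (by positivity), ih, prod_range_succ]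
    ring

lemma besselNorm_eq_tsum_prod {α : ℝ} (hα : 0 < α + 1) (t : ℝ) :
    besselNorm α t = ∑' n : ℕ, ∏ k ∈ range n, -(t / 2) ^ 2 / ((α + 1 + k) * (k + 1)) := by
  rw [besselNorm, ← tsum_mul_left]
  refine tsum_congr fun m => ?_
  have hΓ : Real.Gamma (α + 1) ≠ 0 := (Real.Gamma_pos_of_pos hα).ne'
  rw [Real.Gamma_add_nat_eq_mul_prod hα, ← prod_range_add_one_eq_factorial, Nat.cast_prod,
    prod_div_distrib, prod_mul_distrib, prod_const, card_range, neg_pow ((t / 2) ^ 2), pow_mul]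
  push_cast
  field_simp

lemma summable_prod_range_of_tendsto {𝕜 : Type*} [NormedField 𝕜] [CompleteSpace 𝕜]
    {r : ℕ → 𝕜} {l : 𝕜} (hl : ‖l‖ < 1) (hr : Tendsto r atTop (𝓝 l)) :
    Summable fun n => ∏ k ∈ range n, r k := by
  obtain ⟨q, hlq, hq⟩ := exists_between hl
  refine summable_of_ratio_norm_eventually_le hq ?_
  filter_upwards [hr.norm.eventually (gt_mem_nhds hlq)] with n hn
  rw [prod_range_succ, norm_mul, mul_comm]
  exact mul_le_mul_of_nonneg_right hn.le (norm_nonneg _)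

lemma tendsto_quadratic_div_quadratic (a b c d : ℝ) :
    Tendsto (fun k : ℕ => (a * (c + k) ^ 2 + b) / ((d + k) * (k + 1))) atTop (𝓝 a) := by
  have hcont : ContinuousAt
      (fun u : ℝ => (a * (c * u + 1) ^ 2 + b * u ^ 2) / ((d * u + 1) * (u + 1))) 0 := by
    fun_prop (disch := norm_num)
  have h := hcont.tendsto.comp tendsto_one_div_atTop_nhds_zero_nat
  simp only [mul_zero, zero_add, add_zero, one_pow, mul_one, ne_eq, OfNat.ofNat_ne_zero,
    not_false_eq_true, zero_pow, div_one] at h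
  refine h.congr' ?_
  filter_upwards [eventually_ge_atTop 1] with k hk
  have hk' : (k : ℝ) ≠ 0 := by positivity
  simp only [Function.comp_apply]
  field_simp
  ring

lemma tendsto_sinh_mul_div (x : ℝ) :
    Tendsto (fun ε => Real.sinh (ε * x) / ε) (𝓝[≠] 0) (𝓝 x) := by
  have hd : HasDerivAt (fun ε => Real.sinh (ε * x)) x 0 := by
    simpa using ((hasDerivAt_id (0 : ℝ)).mul_const x).sinh
  refine (hasDerivAt_iff_tendsto_slope.mp hd).congr fun ε => ?_
  simp [slope_def_field]

noncomputable def jacobiRatio (α lam ε y : ℝ) (k : ℕ) : ℝ :=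
  -y * ((α + 1/2 + k) ^ 2 * ε ^ 2 + lam ^ 2 / 4) / ((α + 1 + k) * (k + 1))

lemma hyp2F1_jacobi_term_eq {ε : ℝ} (hε : ε ≠ 0) (α lam x : ℝ) (n : ℕ) :
    cpoch ((α : ℂ) + 1/2 + Complex.I * lam / (2 * ε)) n *
        cpoch ((α : ℂ) + 1/2 - Complex.I * lam / (2 * ε)) n /
        (cpoch ((α : ℂ) + 1) n * (n.factorial : ℂ)) * (-(Real.sinh (ε * x) : ℂ) ^ 2) ^ n
      = ((∏ k ∈ range n, jacobiRatio α lam ε ((Real.sinh (ε * x) / ε) ^ 2) k : ℝ) : ℂ) := by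
  rw [hyp2F1_term_eq_prod, Complex.ofReal_prod]
  have hε' : (ε : ℂ) ≠ 0 := Complex.ofReal_ne_zero.mpr hε
  refine prod_congr rfl fun k _ => ?_
  rw [jacobiRatio, div_mul_eq_mul_div]
  push_cast
  congr 1
  field_simp
  linear_combination 4 * (lam : ℂ) ^ 2 * Complex.sinh (ε * x) ^ 2 * Complex.I_sq

lemma continuous_jacobiRatio (α lam : ℝ) (k : ℕ) :
    Continuous fun p : ℝ × ℝ => jacobiRatio α lam p.1 p.2 k := by
  unfold jacobiRatio
  fun_prop

lemma abs_jacobiRatio_le {α lam ε ε₀ y Y : ℝ} (hα : 0 < α + 1) (hε : |ε| ≤ ε₀) (hy : |y| ≤ Y)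
    (k : ℕ) :
    |jacobiRatio α lam ε y k|
      ≤ (Y * ε₀ ^ 2 * (α + 1/2 + k) ^ 2 + Y * (lam ^ 2 / 4)) / ((α + 1 + k) * (k + 1)) := by
  have hden : 0 < (α + 1 + k) * (k + 1) :=
    mul_pos (add_pos_of_pos_of_nonneg hα k.cast_nonneg) k.cast_add_one_pos
  rw [jacobiRatio, abs_div, abs_of_pos hden, abs_mul, abs_neg,
    abs_of_nonneg (by positivity : 0 ≤ (α + 1/2 + k) ^ 2 * ε ^ 2 + lam ^ 2 / 4)]
  have hε₂ : ε ^ 2 ≤ ε₀ ^ 2 := sq_le_sq' (abs_le.mp hε).1 (abs_le.mp hε).2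
  gcongr
  calc |y| * ((α + 1/2 + k) ^ 2 * ε ^ 2 + lam ^ 2 / 4)
      ≤ Y * ((α + 1/2 + k) ^ 2 * ε₀ ^ 2 + lam ^ 2 / 4) := by
        gcongr
        exact (abs_nonneg y).trans hy
    _ = Y * ε₀ ^ 2 * (α + 1/2 + k) ^ 2 + Y * (lam ^ 2 / 4) := by ring

theorem jacobi_to_bessel_limit (α lam x : ℝ) (hα : α > -(1/2)) :
    Tendsto
      (fun ε : ℝ =>
        hyp2F1 ((α : ℂ) + 1/2 + Complex.I * lam / (2 * ε))
          ((α : ℂ) + 1/2 - Complex.I * lam / (2 * ε)) ((α : ℂ) + 1)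
          (-(Real.sinh (ε * x) : ℂ) ^ 2))
      (nhdsWithin 0 (Set.Ioi 0)) (nhds ((besselNorm α (lam * x) : ℂ))) := by
  have hα₁ : 0 < α + 1 := by linarith
  set σ : ℝ → ℝ := fun ε => (Real.sinh (ε * x) / ε) ^ 2
  have hσ : Tendsto σ (𝓝[>] 0) (𝓝 (x ^ 2)) :=
    ((tendsto_sinh_mul_div x).pow 2).mono_left (nhdsWithin_mono _ fun _ h => ne_of_gt h)
  set Y := x ^ 2 + 1
  obtain ⟨ε₀, hε₀, hYε₀⟩ : ∃ ε₀ > 0, ‖Y * ε₀ ^ 2‖ < 1 := by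
    refine ⟨1 / (2 * Y), by positivity, ?_⟩
    have h : Y * (1 / (2 * Y)) ^ 2 = 1 / (4 * Y) := by field_simp; ring
    rw [h, Real.norm_of_nonneg (by positivity), div_lt_one (by positivity)]
    nlinarith [sq_nonneg x]
  have hlim (n : ℕ) : Tendsto (fun ε => ∏ k ∈ range n, jacobiRatio α lam ε (σ ε) k) (𝓝[>] 0)
      (𝓝 (∏ k ∈ range n, -(lam * x / 2) ^ 2 / ((α + 1 + k) * (k + 1)))) := by
    refine tendsto_finsetProd _ fun k _ => ?_
    have h₀ : jacobiRatio α lam 0 (x ^ 2) k = -(lam * x / 2) ^ 2 / ((α + 1 + k) * (k + 1)) := by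
      simp only [jacobiRatio]
      ring
    rw [← h₀]
    exact ((continuous_jacobiRatio α lam k).tendsto (0, x ^ 2)).comp
      ((tendsto_nhdsWithin_of_tendsto_nhds tendsto_id).prodMk_nhds hσ)
  rw [besselNorm_eq_tsum_prod hα₁, Complex.ofReal_tsum]
  unfold hyp2F1
  refine tendsto_tsum_of_dominated_convergence (summable_prod_range_of_tendsto hYε₀
      (tendsto_quadratic_div_quadratic _ (Y * (lam ^ 2 / 4)) (α + 1/2) (α + 1)))
    (fun n => ((Complex.continuous_ofReal.tendsto _).comp (hlim n)).congr' ?_) ?_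
  · filter_upwards [self_mem_nhdsWithin] with ε hε
    exact (hyp2F1_jacobi_term_eq (ne_of_gt hε) α lam x n).symm
  · filter_upwards [Ioc_mem_nhdsGT hε₀, hσ.eventually (gt_mem_nhds (lt_add_one _))]
      with ε hε hσε n
    rw [hyp2F1_jacobi_term_eq hε.1.ne' α lam x n, Complex.norm_real, Real.norm_eq_abs, abs_prod]
    exact prod_le_prod (fun _ _ => abs_nonneg _) fun k _ => abs_jacobiRatio_le hα₁
      (by rw [abs_of_pos hε.1]; exact hε.2) (by rw [abs_of_nonneg (sq_nonneg _)]; exact hσε.le) k
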